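/- Let n ≥ 1, let f : (0,∞) → (0,∞) be differentiable with f'(x) > 0 and f'(x) ≤ f(x)/x for all x > 0. Fix r > 0, a vector g ∈ ℝ^n with g_l > 0, nonnegative off-diagonal gains g_j ≥ 0 (j ≠ l), and σ > 0. Define SINR(p) = g_l·p_l/(Σ_{j≠l} g_j·p_j + σ) and I(p) = r·p_l/f(SINR(p)). Then for every α > 1 and p > 0 componentwise, I(αp) < α·I(p). -/

import Mathlib

open Finset

/-!
Scaling every power by `α > 1` multiplies the signal by `α` but the interference-plus-noise
only by less than `α`, because the noise `σ > 0` is not scaled; so the SINR strictly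
increases. As `f` is strictly increasing,
`I(αp) = α · r p_l / f(SINR(αp)) < α · r p_l / f(SINR(p)) = α · I(p)`.
-/

theorem strictMonoOn_Ioi_of_deriv_pos {f : ℝ → ℝ} {a : ℝ}
    (hdiff : ∀ x, a < x → DifferentiableAt ℝ f x) (hderiv : ∀ x, a < x → 0 < deriv f x) :
    StrictMonoOn f (Set.Ioi a) :=
  strictMonoOn_of_deriv_pos (convex_Ioi a)
    (fun x hx => (hdiff x hx).continuousAt.continuousWithinAt)
    (fun x hx => hderiv x (by rwa [interior_Ioi] at hx))

theorem div_add_lt_mul_div_mul_add {a D σ α : ℝ} (ha : 0 < a) (hD : 0 ≤ D) (hσ : 0 < σ)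
    (hα : 1 < α) : a / (D + σ) < α * a / (α * D + σ) := by
  rw [div_lt_div_iff₀ (by positivity) (by nlinarith)]
  nlinarith [mul_pos (mul_pos (sub_pos.mpr hα) hσ) ha]

section SINR

variable {ι : Type*} [Fintype ι] [DecidableEq ι]

noncomputable def sinr (g : ι → ℝ) (l : ι) (σ : ℝ) (p : ι → ℝ) : ℝ :=
  g l * p l / (∑ j ∈ univ.erase l, g j * p j + σ)

variable {g : ι → ℝ} {l : ι} {σ : ℝ} {p : ι → ℝ}

theorem interference_nonneg (hg : ∀ j, j ≠ l → 0 ≤ g j) (hp : ∀ i, 0 < p i) :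
    0 ≤ ∑ j ∈ univ.erase l, g j * p j :=
  sum_nonneg fun j hj => mul_nonneg (hg j (ne_of_mem_erase hj)) (hp j).le

theorem sinr_pos (hgl : 0 < g l) (hg : ∀ j, j ≠ l → 0 ≤ g j) (hσ : 0 < σ)
    (hp : ∀ i, 0 < p i) : 0 < sinr g l σ p :=
  div_pos (mul_pos hgl (hp l)) (add_pos_of_nonneg_of_pos (interference_nonneg hg hp) hσ)

theorem sinr_smul (α : ℝ) (p : ι → ℝ) :
    sinr g l σ (α • p) = α * (g l * p l) / (α * ∑ j ∈ univ.erase l, g j * p j + σ) := by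
  simp only [sinr, Pi.smul_apply, smul_eq_mul, mul_sum, mul_left_comm]

theorem sinr_lt_sinr_smul (hgl : 0 < g l) (hg : ∀ j, j ≠ l → 0 ≤ g j) (hσ : 0 < σ)
    (hp : ∀ i, 0 < p i) {α : ℝ} (hα : 1 < α) : sinr g l σ p < sinr g l σ (α • p) := by
  rw [sinr_smul]
  exact div_add_lt_mul_div_mul_add (mul_pos hgl (hp l)) (interference_nonneg hg hp) hσ hα

end SINR

theorem general_interference_scalable_general {n : ℕ} (l : Fin n)
    (f : ℝ → ℝ) (hf : ∀ x : ℝ, 0 < x → 0 < f x)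
    (hdiff : ∀ x : ℝ, 0 < x → DifferentiableAt ℝ f x)
    (hderiv_pos : ∀ x : ℝ, 0 < x → 0 < deriv f x)
    (r : ℝ) (hr : 0 < r) (g : Fin n → ℝ) (hgl : 0 < g l)
    (hg : ∀ j, j ≠ l → 0 ≤ g j) (σ : ℝ) (hσ : 0 < σ) :
    let SINR : (Fin n → ℝ) → ℝ :=
      fun p => g l * p l / (∑ j ∈ univ.erase l, g j * p j + σ)
    let I : (Fin n → ℝ) → ℝ := fun p => r * p l / f (SINR p)
    ∀ α : ℝ, 1 < α → ∀ p : Fin n → ℝ, (∀ i, 0 < p i) →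
      I (α • p) < α * I p := by
  intro SINR I α hα p hp
  have hpos : 0 < SINR p := sinr_pos hgl hg hσ hp
  have hlt : SINR p < SINR (α • p) := sinr_lt_sinr_smul hgl hg hσ hp hα
  have hflt : f (SINR p) < f (SINR (α • p)) :=
    strictMonoOn_Ioi_of_deriv_pos hdiff hderiv_pos hpos (hpos.trans hlt) hlt
  calc I (α • p) = r * (α * p l) / f (SINR (α • p)) := by
        simp only [I, Pi.smul_apply, smul_eq_mul]
    _ < r * (α * p l) / f (SINR p) :=
        div_lt_div_of_pos_left (by have := hp l; positivity) (hf _ hpos) hflt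
    _ = α * I p := by ring

/-- Scalability (Lemma 2): for a positive rate function f with f' > 0 and
f'(x) ≤ f(x)/x, the interference map I(p) = r·p_l/f(SINR(p)) satisfies
I(αp) < α·I(p) for all α > 1 and p > 0. -/
theorem general_interference_scalable {n : ℕ} (hn : 1 ≤ n) (l : Fin n)
    (f : ℝ → ℝ) (hf : ∀ x : ℝ, 0 < x → 0 < f x)
    (hdiff : ∀ x : ℝ, 0 < x → DifferentiableAt ℝ f x)
    (hderiv_pos : ∀ x : ℝ, 0 < x → 0 < deriv f x)
    (hderiv_le : ∀ x : ℝ, 0 < x → deriv f x ≤ f x / x)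
    (r : ℝ) (hr : 0 < r) (g : Fin n → ℝ) (hgl : 0 < g l)
    (hg : ∀ j, j ≠ l → 0 ≤ g j) (σ : ℝ) (hσ : 0 < σ) :
    let SINR : (Fin n → ℝ) → ℝ :=
      fun p => g l * p l / (∑ j ∈ univ.erase l, g j * p j + σ)
    let I : (Fin n → ℝ) → ℝ := fun p => r * p l / f (SINR p)
    ∀ α : ℝ, 1 < α → ∀ p : Fin n → ℝ, (∀ i, 0 < p i) →
      I (α • p) < α * I p :=
  general_interference_scalable_general l f hf hdiff hderiv_pos r hr g hgl hg σ hσ
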